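/- Let Φ : ℝ^d ⇒ ℝ^ℓ be a cusco map. Then m(Φ)(x̄) = Φ(x̄) for Lebesgue-almost all x̄ ∈ ℝ^d. -/

import Mathlib

open MeasureTheory Metric Filter Set Topology

noncomputable section

/-- `ℝ^n` with the Euclidean structure. -/
abbrev Euc (n : ℕ) : Type := EuclideanSpace ℝ (Fin n)

/-- Closed convex hull of a set. -/
def clco {n : ℕ} (A : Set (Euc n)) : Set (Euc n) := closure (convexHull ℝ A)

/-- A function is locally bounded. -/
def LocBdd {d l : ℕ} (f : Euc d → Euc l) : Prop :=
  ∀ x : Euc d, ∃ δ > (0 : ℝ), ∃ C : ℝ, ∀ y ∈ Metric.ball x δ, ‖f y‖ ≤ C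

/-- The Filippov regularization of `f`. -/
def FilippovReg {d l : ℕ} (f : Euc d → Euc l) (x : Euc d) : Set (Euc l) :=
  ⋂ (N : Set (Euc d)) (_ : volume N = 0) (δ : ℝ) (_ : 0 < δ),
    clco (f '' (Metric.ball x δ \ N))

/-- The Krasovskii regularization of `f`. -/
def KrasovskiiReg {d l : ℕ} (f : Euc d → Euc l) (x : Euc d) : Set (Euc l) :=
  ⋂ (δ : ℝ) (_ : 0 < δ), clco (f '' Metric.ball x δ)

/-- A set-valued map is cusco: upper semicontinuous with nonempty compact convex values. -/
def IsCusco {d l : ℕ} (Φ : Euc d → Set (Euc l)) : Prop :=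
  (∀ x : Euc d, ∀ U : Set (Euc l), IsOpen U → Φ x ⊆ U →
      ∃ δ > (0 : ℝ), ∀ y ∈ Metric.ball x δ, Φ y ⊆ U) ∧
  ∀ x : Euc d, (Φ x).Nonempty ∧ IsCompact (Φ x) ∧ Convex ℝ (Φ x)

/-- The "minimal" map `m(Φ)` associated to a set-valued map `Φ`. -/
def mPhi {d l : ℕ} (Φ : Euc d → Set (Euc l)) (x : Euc d) : Set (Euc l) :=
  ⋂ (N : Set (Euc d)) (_ : volume N = 0) (δ : ℝ) (_ : 0 < δ),
    clco (⋃ a ∈ Metric.ball x δ \ N, Φ a)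

/-- A point of approximate continuity of `f`. -/
def ApproxContAt {d l : ℕ} (f : Euc d → Euc l) (x : Euc d) : Prop :=
  ∀ ε > (0 : ℝ),
    Tendsto (fun δ : ℝ =>
        volume {y ∈ Metric.ball x δ | ε ≤ ‖f y - f x‖} / volume (Metric.ball x δ))
      (𝓝[>] 0) (𝓝 0)

/-- A cusco map is Filippov representable if it is the Filippov regularization
of some locally bounded measurable function. -/
def FilippovRepresentable {d l : ℕ} (Φ : Euc d → Set (Euc l)) : Prop :=
  ∃ f : Euc d → Euc l, Measurable f ∧ LocBdd f ∧ ∀ x, Φ x = FilippovReg f x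

/-!
`m(Φ)(x) ⊆ Φ(x)` holds everywhere by upper semicontinuity. Conversely, if `y ∈ Φ(x)` is missed
by `clco Φ(B_δ(x) \ N)`, then a functional `g` from a countable dense family and a rational `r`
strictly separate `y` from `Φ(B_δ(x) \ N)`. So `x` lies in the lower inverse `E = Φ⁻({g > r})`,
while `E ∩ B_δ(x) ⊆ N` is null: `x` is outside the support of the restriction of Lebesgue
measure to `E`. For each of the countably many pairs `(g, r)` this happens only on a null set.
-/

lemma clco_mono {n : ℕ} {A B : Set (Euc n)} (h : A ⊆ B) : clco A ⊆ clco B :=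
  closure_mono (convexHull_mono h)

lemma mPhi_subset_clco {d l : ℕ} {Φ : Euc d → Set (Euc l)} {x : Euc d} {N : Set (Euc d)}
    (hN : volume N = 0) {δ : ℝ} (hδ : 0 < δ) :
    mPhi Φ x ⊆ clco (⋃ a ∈ ball x δ \ N, Φ a) :=
  fun _ hz => mem_iInter₂.1 (mem_iInter₂.1 hz N hN) δ hδ

lemma Dense.exists_rat_separating {E : Type*} [NormedAddCommGroup E] [NormedSpace ℝ E]
    {G : Set (E →L[ℝ] ℝ)} (hG : Dense G) {S : Set E} (hS : Bornology.IsBounded S) {y : E}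
    (hy : y ∉ closure (convexHull ℝ S)) :
    ∃ g ∈ G, ∃ r : ℚ, (∀ z ∈ S, g z < r) ∧ (r : ℝ) < g y := by
  set C := closure (convexHull ℝ S)
  obtain ⟨f, u, hfC, hfy⟩ :=
    geometric_hahn_banach_closed_point (convex_convexHull ℝ S).closure isClosed_closure hy
  obtain ⟨R, hR, hCR⟩ :=
    ((isBounded_convexHull.2 hS).closure.insert y).exists_pos_norm_le
  set m := f y - u
  have hm : 0 < m := sub_pos.2 hfy
  obtain ⟨g, hgG, hgf⟩ := hG.exists_dist_lt f (div_pos hm (mul_pos three_pos hR))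
  have hclose : ∀ z : E, ‖z‖ ≤ R → |g z - f z| < m / 3 := fun z hz =>
    calc |g z - f z| = ‖(g - f) z‖ := rfl
      _ ≤ ‖g - f‖ * ‖z‖ := (g - f).le_opNorm z
      _ ≤ ‖g - f‖ * R := by gcongr
      _ < m / (3 * R) * R := by
        gcongr; rwa [← dist_eq_norm, dist_comm]
      _ = m / 3 := by field_simp
  obtain ⟨r, hur, hry⟩ := exists_rat_btwn (show u + m / 3 < f y - m / 3 by linarith)
  refine ⟨g, hgG, r, fun z hz => ?_, ?_⟩
  · have hzC : z ∈ C := subset_closure (subset_convexHull ℝ S hz)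
    linarith [(abs_lt.1 (hclose z (hCR z (mem_insert_of_mem y hzC)))).2, hfC z hzC]
  · linarith [(abs_lt.1 (hclose y (hCR y (mem_insert y C)))).1]

def lowerInverse {α β : Type*} (Φ : α → Set β) (U : Set β) : Set α :=
  {w | (Φ w ∩ U).Nonempty}

namespace IsCusco

variable {d l : ℕ} {Φ : Euc d → Set (Euc l)}

lemma mPhi_subset (hΦ : IsCusco Φ) (x : Euc d) : mPhi Φ x ⊆ Φ x := by
  intro z hz
  rw [← (hΦ.2 x).2.1.isClosed.closure_eq, closure_eq_iInter_cthickening]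
  refine mem_iInter₂.2 fun ε hε => ?_
  obtain ⟨δ, hδ, hΦδ⟩ := hΦ.1 x _ isOpen_thickening (self_subset_thickening hε (Φ x))
  have hS : (⋃ a ∈ ball x δ \ ∅, Φ a) ⊆ thickening ε (Φ x) :=
    iUnion₂_subset fun a ha => hΦδ a ha.1
  exact closure_thickening_subset_cthickening ε _ <| closure_mono
    (convexHull_min hS ((hΦ.2 x).2.2.thickening ε)) (mPhi_subset_clco measure_empty hδ hz)

lemma exists_isBounded_biUnion_ball (hΦ : IsCusco Φ) (x : Euc d) :
    ∃ δ > 0, Bornology.IsBounded (⋃ a ∈ ball x δ, Φ a) := by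
  obtain ⟨δ, hδ, hΦδ⟩ := hΦ.1 x _ isOpen_thickening (self_subset_thickening one_pos (Φ x))
  exact ⟨δ, hδ, (hΦ.2 x).2.1.isBounded.thickening.subset (iUnion₂_subset hΦδ)⟩

lemma subset_mPhi (hΦ : IsCusco Φ) {G : Set (Euc l →L[ℝ] ℝ)} (hG : Dense G) {x : Euc d}
    (hx : ∀ g ∈ G, ∀ r : ℚ, x ∈ lowerInverse Φ {z | r < g z} →
      x ∈ (volume.restrict (lowerInverse Φ {z | r < g z})).support) :
    Φ x ⊆ mPhi Φ x := by
  intro y hy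
  refine mem_iInter₂.2 fun N hN => mem_iInter₂.2 fun δ hδ => ?_
  obtain ⟨δ₀, hδ₀, hbdd⟩ := hΦ.exists_isBounded_biUnion_ball x
  set B := ball x (min δ δ₀)
  set S := ⋃ a ∈ B \ N, Φ a
  by_contra hyδ
  have hyS : y ∉ clco S := fun h => hyδ <| clco_mono (biUnion_subset_biUnion_left
    (sdiff_subset_sdiff_left (ball_subset_ball (min_le_left _ _)))) h
  have hSbdd : Bornology.IsBounded S := hbdd.subset <|
    biUnion_subset_biUnion_left fun a ha => ball_subset_ball (min_le_right _ _) ha.1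
  obtain ⟨g, hgG, r, hgS, hgy⟩ := hG.exists_rat_separating hSbdd hyS
  have hnull : volume (B ∩ lowerInverse Φ {z | r < g z}) = 0 := by
    refine measure_mono_null (fun w ⟨hwB, z, hzΦ, hrz⟩ => ?_) hN
    by_contra hwN
    exact (hgS z (mem_biUnion ⟨hwB, hwN⟩ hzΦ)).not_gt hrz
  have hpos := (Measure.mem_support_iff_forall x).1 (hx g hgG r ⟨y, hy, hgy⟩) B
    (ball_mem_nhds x (lt_min hδ hδ₀))
  rw [Measure.restrict_apply measurableSet_ball] at hpos
  exact hpos.ne' hnull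

end IsCusco

/-- Proposition: for a cusco map `Φ`, `m(Φ) = Φ` almost everywhere. -/
theorem mPhi_ae_eq (d l : ℕ) (Φ : Euc d → Set (Euc l)) (hΦ : IsCusco Φ) :
    ∀ᵐ xbar : Euc d, mPhi Φ xbar = Φ xbar := by
  obtain ⟨G, hGc, hGd⟩ := TopologicalSpace.exists_countable_dense (Euc l →L[ℝ] ℝ)
  have hsupp : ∀ᵐ x : Euc d, ∀ g ∈ G, ∀ r : ℚ, x ∈ lowerInverse Φ {z | r < g z} →
      x ∈ (volume.restrict (lowerInverse Φ {z | r < g z})).support := by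
    rw [ae_ball_iff hGc]
    exact fun g _ => ae_all_iff.2 fun r => ae_imp_of_ae_restrict Measure.support_mem_ae
  filter_upwards [hsupp] with x hx
  exact (hΦ.mPhi_subset x).antisymm (hΦ.subset_mPhi hGd hx)
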